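/- arXiv:2604.17671 — 2 statements merged into one kernel-verified Lean document; each statement's English description precedes it below -/
import Mathlib

section
/- Let A be a graded-commutative DGA over ℚ, let a ∈ A₁ with da = 0, r ∈ A₀, b := a − dr, and ρ₁, ρ₂ ∈ A₁ with dρ₁ = 0 and dρ₂ = ρ₁·a. Let further r' ∈ A₀ and c ∈ A₁ satisfy dr' = ρ₁ − c (so dc = 0). Then the element P̃₂ := ρ₂ + ρ₁·r − r'·b of A₁ satisfies dP̃₂ = c·b. -/
noncomputable section

/-- A graded-commutative differential graded algebra over `ℚ`: a `ℤ`-graded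
associative unital `ℚ`-algebra `A = ⊕ᵢ Aᵢ` with a differential `d` of degree `+1`
squaring to zero, satisfying the (signed) Leibniz rule on homogeneous elements,
and graded commutativity. -/
structure GCDGA (A : Type*) [Ring A] [Algebra ℚ A] where
  deg : ℤ → Submodule ℚ A
  decomp : DirectSum.Decomposition deg
  one_mem : (1 : A) ∈ deg 0
  mul_mem : ∀ {i j : ℤ} {x y : A}, x ∈ deg i → y ∈ deg j → x * y ∈ deg (i + j)
  d : A →ₗ[ℚ] A
  d_sq : ∀ x : A, d (d x) = 0
  d_deg : ∀ {i : ℤ} {x : A}, x ∈ deg i → d x ∈ deg (i + 1)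
  leibniz : ∀ {i : ℤ} (x y : A), x ∈ deg i →
    d (x * y) = d x * y + ((-1 : ℚ) ^ i) • (x * d y)
  gcomm : ∀ {i j : ℤ} (x y : A), x ∈ deg i → y ∈ deg j →
    x * y = ((-1 : ℚ) ^ (i * j)) • (y * x)

/-- with `a ∈ A₁`, `da = 0`, `r ∈ A₀`, `b := a − dr`, `ρ₁, ρ₂ ∈ A₁`
with `dρ₁ = 0`, `dρ₂ = ρ₁·a`, and `r' ∈ A₀`, `c ∈ A₁` with `dr' = ρ₁ − c`, the
element `P̃₂ := ρ₂ + ρ₁·r − r'·b` satisfies `dP̃₂ = c·b`. -/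
theorem dP2_eq_c_mul_b {A : Type*} [Ring A] [Algebra ℚ A] (G : GCDGA A)
    (a : A) (ha : a ∈ G.deg 1) (hda : G.d a = 0)
    (r : A) (hr : r ∈ G.deg 0)
    (ρ₁ ρ₂ : A) (hρ₁ : ρ₁ ∈ G.deg 1) (hρ₂ : ρ₂ ∈ G.deg 1)
    (hdρ₁ : G.d ρ₁ = 0) (hdρ₂ : G.d ρ₂ = ρ₁ * a)
    (r' : A) (hr' : r' ∈ G.deg 0)
    (c : A) (hc : c ∈ G.deg 1) (hdr' : G.d r' = ρ₁ - c)
    (b : A) (hb : b = a - G.d r) :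
    G.d (ρ₂ + ρ₁ * r - r' * b) = c * b := by
  have hdb : G.d b = 0 := by
    rw [hb, map_sub, hda, G.d_sq r, sub_zero]
  have h1 : G.d (ρ₁ * r) = -(ρ₁ * G.d r) := by
    rw [G.leibniz ρ₁ r hρ₁]
    simp [hdρ₁]
  have h2 : G.d (r' * b) = (ρ₁ - c) * b := by
    rw [G.leibniz r' b hr', hdr', hdb]
    simp
  rw [map_sub, map_add, hdρ₂, h1, h2, hb]
  noncomm_ring

end
end

section
/- Let A be a graded-commutative DGA over ℚ, n ≥ 2, a ∈ A₁ with da = 0, r ∈ A₀, b := a − dr, and ρ_k ∈ A₁ (1 ≤ k ≤ n) with dρ_k = ρ_{k−1}·a (convention ρ₀ := 0). For 2 ≤ m ≤ n set P_m := Σ_{k=0}^{m−1} (1/k!) ρ_{m−k}·r^k and P₁ := ρ₁. Then dP_m = P_{m−1}·b for every m with 2 ≤ m ≤ n. Moreover b·b = 0, so that for any r' ∈ A₀ one has (ρ₂ + ρ₁·r − r'·b)·b = P₂·b; in particular dP₃ = P̃₂·b with P̃₂ := ρ₂ + ρ₁·r − r'·b, as in equations (2) and (3) of the paper. -/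
/-!
Write `P_{m+1} = ∑_{k ≤ m} ρ_{m+1-k} · r^[k]` with the divided powers `r^[k] = r^k / k!`. Since `r`
has degree `0`, these commute with everything and satisfy `d r^[k+1] = dr · r^[k]`. Differentiating
termwise, the parts `ρ_{m-k} · a · r^[k]` sum to `P_m · a` (the term `k = m` vanishes as `ρ₀ = 0`),
and the parts `ρ_{m+1-k} · d r^[k]`, after shifting `k`, sum to `P_m · dr`. Finally `b` has odd
degree, so `b · b = -(b · b)` by graded commutativity.
-/

noncomputable section

/-- `P_m := ∑_{k=0}^{m−1} (1/k!) ρ_{m−k} · r^k` (so `P₁ = ρ₁`). -/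
def Pm {A : Type*} [Ring A] [Algebra ℚ A] (ρ : ℕ → A) (r : A) (m : ℕ) : A :=
  ∑ k ∈ Finset.range m, ((k.factorial : ℚ))⁻¹ • (ρ (m - k) * r ^ k)

def dividedPow {A : Type*} [Ring A] [Algebra ℚ A] (r : A) (k : ℕ) : A :=
  ((k.factorial : ℚ))⁻¹ • r ^ k

section

variable {A : Type*} [Ring A] [Algebra ℚ A]

@[simp]
theorem dividedPow_zero (r : A) : dividedPow r 0 = 1 := by
  simp [dividedPow]

theorem Pm_eq_sum_mul_dividedPow (ρ : ℕ → A) (r : A) (m : ℕ) :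
    Pm ρ r m = ∑ k ∈ Finset.range m, ρ (m - k) * dividedPow r k := by
  simp only [Pm, dividedPow, mul_smul_comm]

theorem Pm_two (ρ : ℕ → A) (r : A) : Pm ρ r 2 = ρ 2 + ρ 1 * r := by
  simp [Pm, Finset.sum_range_succ]

namespace GCDGA

variable (G : GCDGA A)

theorem d_one : G.d 1 = 0 := by
  simpa using G.leibniz (1 : A) 1 G.one_mem

theorem commute_of_mem_deg_zero {x y : A} {j : ℤ} (hx : x ∈ G.deg 0) (hy : y ∈ G.deg j) :
    Commute x y := by
  simpa [Commute, SemiconjBy] using G.gcomm x y hx hy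

theorem d_mem_deg_one {x : A} (hx : x ∈ G.deg 0) : G.d x ∈ G.deg 1 := by
  simpa using G.d_deg hx

theorem d_mul_of_mem_deg_zero {x : A} (y : A) (hx : x ∈ G.deg 0) :
    G.d (x * y) = G.d x * y + x * G.d y := by
  simpa using G.leibniz x y hx

theorem d_mul_of_mem_deg_one {x : A} (y : A) (hx : x ∈ G.deg 1) :
    G.d (x * y) = G.d x * y - x * G.d y := by
  simpa [sub_eq_add_neg] using G.leibniz x y hx

theorem mul_self_eq_zero_of_odd {x : A} {i : ℤ} (hi : Odd i) (hx : x ∈ G.deg i) :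
    x * x = 0 := by
  have h := G.gcomm x x hx hx
  rw [(hi.mul hi).neg_one_zpow, neg_one_smul] at h
  have h2 : (2 : ℚ) • (x * x) = 0 := by
    rw [two_smul]
    nth_rewrite 1 [h]
    exact neg_add_cancel _
  simpa using h2

theorem d_pow_succ {r : A} (hr : r ∈ G.deg 0) (k : ℕ) :
    G.d (r ^ (k + 1)) = (k + 1) • (G.d r * r ^ k) := by
  induction k with
  | zero => simp
  | succ k ih =>
    have hcomm := (G.commute_of_mem_deg_zero hr (G.d_mem_deg_one hr)).eq
    rw [pow_succ', G.d_mul_of_mem_deg_zero _ hr, ih, mul_smul_comm, ← mul_assoc, hcomm,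
      mul_assoc, ← pow_succ', succ_nsmul' _ (k + 1)]

theorem d_dividedPow_succ {r : A} (hr : r ∈ G.deg 0) (k : ℕ) :
    G.d (dividedPow r (k + 1)) = G.d r * dividedPow r k := by
  have hk : ((k + 1 : ℕ) : ℚ) ≠ 0 := Nat.cast_ne_zero.mpr k.succ_ne_zero
  rw [dividedPow, map_smul, G.d_pow_succ hr, ← Nat.cast_smul_eq_nsmul ℚ, smul_smul,
    Nat.factorial_succ, Nat.cast_mul, mul_inv, mul_right_comm, inv_mul_cancel₀ hk, one_mul,
    dividedPow, mul_smul_comm]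

theorem commute_dividedPow {r y : A} {j : ℤ} (hr : r ∈ G.deg 0) (hy : y ∈ G.deg j) (k : ℕ) :
    Commute (dividedPow r k) y :=
  ((G.commute_of_mem_deg_zero hr hy).pow_left k).smul_left _

theorem d_Pm_succ {a r : A} {ρ : ℕ → A} {m : ℕ} (ha : a ∈ G.deg 1) (hr : r ∈ G.deg 0)
    (hρ0 : ρ 0 = 0) (hρ : ∀ k, 1 ≤ k → k ≤ m + 1 → ρ k ∈ G.deg 1)
    (hdρ : ∀ k, 1 ≤ k → k ≤ m + 1 → G.d (ρ k) = ρ (k - 1) * a) :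
    G.d (Pm ρ r (m + 1)) = Pm ρ r m * (a - G.d r) := by
  have hterm : ∀ k ∈ Finset.range (m + 1), G.d (ρ (m + 1 - k) * dividedPow r k) =
      ρ (m - k) * a * dividedPow r k - ρ (m + 1 - k) * G.d (dividedPow r k) := by
    intro k hmem
    have hk : k ≤ m := Nat.lt_succ_iff.mp (Finset.mem_range.mp hmem)
    rw [G.d_mul_of_mem_deg_one _ (hρ _ (by omega) (by omega)), hdρ _ (by omega) (by omega),
      show m + 1 - k - 1 = m - k by omega]
  calc G.d (Pm ρ r (m + 1))
      = ∑ k ∈ Finset.range (m + 1), ρ (m - k) * a * dividedPow r k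
          - ∑ k ∈ Finset.range (m + 1), ρ (m + 1 - k) * G.d (dividedPow r k) := by
        rw [Pm_eq_sum_mul_dividedPow, map_sum, ← Finset.sum_sub_distrib]
        exact Finset.sum_congr rfl hterm
    _ = ∑ k ∈ Finset.range m, ρ (m - k) * a * dividedPow r k
          - ∑ k ∈ Finset.range m, ρ (m - k) * (G.d r * dividedPow r k) := by
        rw [Finset.sum_range_succ (fun k => ρ (m - k) * a * dividedPow r k),
          Finset.sum_range_succ' (fun k => ρ (m + 1 - k) * G.d (dividedPow r k))]
        simp [hρ0, G.d_one, G.d_dividedPow_succ hr]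
    _ = Pm ρ r m * (a - G.d r) := by
        rw [Pm_eq_sum_mul_dividedPow, Finset.sum_mul, ← Finset.sum_sub_distrib]
        refine Finset.sum_congr rfl fun k _ => ?_
        simp only [mul_sub, mul_assoc, (G.commute_dividedPow hr ha k).eq,
          (G.commute_dividedPow hr (G.d_mem_deg_one hr) k).eq]

end GCDGA

end

theorem dPm_eq_Pm_pred_mul_b_general {A : Type*} [Ring A] [Algebra ℚ A] (G : GCDGA A)
    (n : ℕ)
    (a : A) (ha : a ∈ G.deg 1)
    (r : A) (hr : r ∈ G.deg 0)
    (ρ : ℕ → A) (hρ0 : ρ 0 = 0)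
    (hρ : ∀ k, 1 ≤ k → k ≤ n → ρ k ∈ G.deg 1)
    (hdρ : ∀ k, 1 ≤ k → k ≤ n → G.d (ρ k) = ρ (k - 1) * a)
    (b : A) (hb : b = a - G.d r) :
    (∀ m, 2 ≤ m → m ≤ n → G.d (Pm ρ r m) = Pm ρ r (m - 1) * b) ∧
    b * b = 0 ∧
    (∀ r' : A, r' ∈ G.deg 0 →
      (ρ 2 + ρ 1 * r - r' * b) * b = Pm ρ r 2 * b ∧
      (3 ≤ n → G.d (Pm ρ r 3) = (ρ 2 + ρ 1 * r - r' * b) * b)) := by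
  have hdP : ∀ m, m + 1 ≤ n → G.d (Pm ρ r (m + 1)) = Pm ρ r m * b := fun m hm => by
    rw [hb]
    exact G.d_Pm_succ ha hr hρ0 (fun k h1 h2 => hρ k h1 (by omega))
      (fun k h1 h2 => hdρ k h1 (by omega))
  have hbb : b * b = 0 :=
    G.mul_self_eq_zero_of_odd odd_one (hb ▸ sub_mem ha (G.d_mem_deg_one hr))
  have hP₂ : ∀ r', (ρ 2 + ρ 1 * r - r' * b) * b = Pm ρ r 2 * b := fun r' => by
    rw [Pm_two, sub_mul, mul_assoc, hbb, mul_zero, sub_zero]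
  refine ⟨fun m hm hmn => ?_, hbb,
    fun r' _ => ⟨hP₂ r', fun h3 => (hdP 2 h3).trans (hP₂ r').symm⟩⟩
  obtain ⟨m, rfl⟩ : ∃ m', m = m' + 1 := ⟨m - 1, by omega⟩
  exact hdP m hmn

/-- `dP_m = P_{m−1}·b` for `2 ≤ m ≤ n`; moreover `b·b = 0`, so for any
`r' ∈ A₀` one has `(ρ₂ + ρ₁·r − r'·b)·b = P₂·b`, and in particular
`dP₃ = P̃₂·b` with `P̃₂ := ρ₂ + ρ₁·r − r'·b` (when `3 ≤ n`). -/
theorem dPm_eq_Pm_pred_mul_b {A : Type*} [Ring A] [Algebra ℚ A] (G : GCDGA A)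
    (n : ℕ) (hn : 2 ≤ n)
    (a : A) (ha : a ∈ G.deg 1) (hda : G.d a = 0)
    (r : A) (hr : r ∈ G.deg 0)
    (ρ : ℕ → A) (hρ0 : ρ 0 = 0)
    (hρ : ∀ k, 1 ≤ k → k ≤ n → ρ k ∈ G.deg 1)
    (hdρ : ∀ k, 1 ≤ k → k ≤ n → G.d (ρ k) = ρ (k - 1) * a)
    (b : A) (hb : b = a - G.d r) :
    (∀ m, 2 ≤ m → m ≤ n → G.d (Pm ρ r m) = Pm ρ r (m - 1) * b) ∧
    b * b = 0 ∧
    (∀ r' : A, r' ∈ G.deg 0 →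
      (ρ 2 + ρ 1 * r - r' * b) * b = Pm ρ r 2 * b ∧
      (3 ≤ n → G.d (Pm ρ r 3) = (ρ 2 + ρ 1 * r - r' * b) * b)) :=
  dPm_eq_Pm_pred_mul_b_general G n a ha r hr ρ hρ0 hρ hdρ b hb

end
end
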